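/- If X ≤_{p0-tvar} Y, then ∫_x^{+∞}(1-F(t)) dt ≤ ∫_x^{+∞}(1-G(t)) dt for all x ≥ F^{-1}(p0). -/

import Mathlib

open MeasureTheory Set

/-- Distribution function of a measure on ℝ. -/
noncomputable def cdfR (μ : Measure ℝ) (x : ℝ) : ℝ := (μ (Iic x)).toReal

/-- Quantile function (generalized inverse of the cdf). -/
noncomputable def quantR (μ : Measure ℝ) (p : ℝ) : ℝ := sInf {x | p ≤ cdfR μ x}

/-- Tail value at risk. -/
noncomputable def tvarR (μ : Measure ℝ) (p : ℝ) : ℝ := (1 - p)⁻¹ * ∫ u in p..1, quantR μ u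

open ProbabilityTheory Filter

set_option linter.unusedSectionVars false

section basic
variable (μ : Measure ℝ) [IsProbabilityMeasure μ]

lemma cdfR_eq : cdfR μ = fun x => cdf μ x := by
  funext x; rw [cdfR, cdf_eq_real, measureReal_def]

lemma cdfR_nonneg (x : ℝ) : 0 ≤ cdfR μ x := by rw [cdfR_eq]; exact cdf_nonneg μ x
lemma cdfR_le_one (x : ℝ) : cdfR μ x ≤ 1 := by rw [cdfR_eq]; exact cdf_le_one μ x
lemma cdfR_mono : Monotone (cdfR μ) := by rw [cdfR_eq]; exact monotone_cdf μ
lemma cdfR_measurable : Measurable (cdfR μ) := (cdfR_mono μ).measurable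

lemma quant_set_nonempty {p : ℝ} (hp : p < 1) : {x | p ≤ cdfR μ x}.Nonempty := by
  have h := (tendsto_cdf_atTop μ).eventually (eventually_ge_nhds hp)
  obtain ⟨x, hx⟩ := h.exists
  exact ⟨x, by rw [cdfR_eq]; exact hx⟩

lemma quant_set_bddBelow {p : ℝ} (hp : 0 < p) : BddBelow {x | p ≤ cdfR μ x} := by
  have h := (tendsto_cdf_atBot μ).eventually (eventually_lt_nhds hp)
  obtain ⟨x0, hx0⟩ := h.exists
  refine ⟨x0, fun y hy => ?_⟩
  by_contra hlt
  push_neg at hlt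
  have : cdfR μ y ≤ cdfR μ x0 := cdfR_mono μ hlt.le
  rw [cdfR_eq] at this hy
  exact absurd (hy.trans this) (not_le.2 hx0)

lemma quant_mem {p : ℝ} (hp : p ∈ Ioo (0:ℝ) 1) : p ≤ cdfR μ (quantR μ p) := by
  set S := {x | p ≤ cdfR μ x} with hS
  have hne := quant_set_nonempty μ hp.2
  have hbdd := quant_set_bddBelow μ hp.1
  set a := sInf S with ha
  have htend : Tendsto (cdfR μ) (nhdsWithin a (Ioi a)) (nhds (cdfR μ a)) := by
    rw [cdfR_eq]
    exact ((cdf μ).right_continuous a).tendsto.mono_left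
      (nhdsWithin_mono a Ioi_subset_Ici_self)
  refine ge_of_tendsto htend ?_
  refine eventually_nhdsWithin_of_forall (fun x hx => ?_)
  obtain ⟨s, hsS, hsx⟩ := exists_lt_of_csInf_lt hne hx
  exact le_trans hsS (cdfR_mono μ hsx.le)

lemma quantR_le_iff {p : ℝ} (hp : p ∈ Ioo (0:ℝ) 1) (x : ℝ) :
    quantR μ p ≤ x ↔ p ≤ cdfR μ x := by
  constructor
  · intro h
    exact le_trans (quant_mem μ hp) (cdfR_mono μ h)
  · intro h
    exact csInf_le (quant_set_bddBelow μ hp.1) h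

lemma lt_quantR_iff {p : ℝ} (hp : p ∈ Ioo (0:ℝ) 1) (x : ℝ) :
    x < quantR μ p ↔ cdfR μ x < p := by
  rw [← not_le, ← not_le, not_iff_not, quantR_le_iff μ hp]

lemma quantR_mono {p q : ℝ} (hp : p ∈ Ioo (0:ℝ) 1) (hq : q ∈ Ioo (0:ℝ) 1)
    (hpq : p ≤ q) : quantR μ p ≤ quantR μ q := by
  refine csInf_le_csInf (quant_set_bddBelow μ hp.1) (quant_set_nonempty μ hq.2)
    (fun x hx => le_trans hpq hx)


/-- A measurable global version of the quantile function. -/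
noncomputable def quantAux (μ : Measure ℝ) (u : ℝ) : ℝ :=
  if u ∈ Ioo (0:ℝ) 1 then quantR μ u else 0

lemma quantAux_measurable : Measurable (quantAux μ) := by
  apply measurable_of_Iic
  intro x
  have h : quantAux μ ⁻¹' Iic x =
      (Ioo (0:ℝ) 1 ∩ Iic (cdfR μ x)) ∪ ((Ioo (0:ℝ) 1)ᶜ ∩ {u : ℝ | (0:ℝ) ≤ x}) := by
    ext u
    by_cases hu : u ∈ Ioo (0:ℝ) 1
    · simp only [mem_preimage, quantAux, if_pos hu, mem_Iic, mem_union, mem_inter_iff, hu,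
        true_and, mem_compl_iff, not_true, false_and, or_false, mem_setOf_eq]
      exact quantR_le_iff μ hu x
    · rw [mem_preimage, quantAux, if_neg hu]
      simp [hu]
  rw [h]
  have h2 : MeasurableSet {u : ℝ | (0:ℝ) ≤ x} := by
    by_cases hx : (0:ℝ) ≤ x
    · simp [hx]
    · simp [hx]
  exact ((measurableSet_Ioo.inter measurableSet_Iic).union
    (measurableSet_Ioo.compl.inter h2))

lemma quantAux_eq_on {u : ℝ} (hu : u ∈ Ioo (0:ℝ) 1) : quantAux μ u = quantR μ u :=
  if_pos hu

/-- Tonelli identity for the tail integral. -/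
lemma tail_lintegral (x : ℝ) :
    ∫⁻ t in Ioi x, ENNReal.ofReal (1 - cdfR μ t) =
      ∫⁻ u in Ioo (0:ℝ) 1, ENNReal.ofReal (quantR μ u - x) := by
  set A : Set (ℝ × ℝ) := {p | x < p.1 ∧ cdfR μ p.1 < p.2 ∧ p.2 < 1} with hA
  have hAmeas : MeasurableSet A := by
    apply MeasurableSet.inter
    · exact measurable_fst measurableSet_Ioi
    · exact ((measurableSet_lt ((cdfR_measurable μ).comp measurable_fst) measurable_snd).inter
        (measurableSet_lt measurable_snd measurable_const))
  have h1 : (volume.prod volume) A = ∫⁻ t in Ioi x, ENNReal.ofReal (1 - cdfR μ t) := by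
    rw [Measure.prod_apply hAmeas]
    have hsec : ∀ t, volume (Prod.mk t ⁻¹' A) =
        (Ioi x).indicator (fun t => ENNReal.ofReal (1 - cdfR μ t)) t := by
      intro t
      by_cases ht : x < t
      · have he : Prod.mk t ⁻¹' A = Ioo (cdfR μ t) 1 := by
          ext u; simp [hA, ht, mem_Ioo]
        rw [he, Real.volume_Ioo, indicator_of_mem (show t ∈ Ioi x from ht)]
      · have he : Prod.mk t ⁻¹' A = (∅ : Set ℝ) := by
          ext u; simp [hA, ht]
        rw [he, measure_empty, indicator_of_notMem (show t ∉ Ioi x from ht)]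
    rw [lintegral_congr hsec, lintegral_indicator measurableSet_Ioi]
  have h2 : (volume.prod volume) A = ∫⁻ u in Ioo (0:ℝ) 1, ENNReal.ofReal (quantR μ u - x) := by
    rw [Measure.prod_apply_symm hAmeas]
    have hsec : ∀ u, volume ((fun t => (t, u)) ⁻¹' A) =
        (Ioo (0:ℝ) 1).indicator (fun u => ENNReal.ofReal (quantR μ u - x)) u := by
      intro u
      by_cases hu : u ∈ Ioo (0:ℝ) 1
      · have he : (fun t => (t, u)) ⁻¹' A = Ioo x (quantR μ u) := by
          ext t
          simp only [hA, mem_preimage, mem_setOf_eq, mem_Ioo, hu.2, and_true]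
          constructor
          · rintro ⟨ha, hb⟩
            exact ⟨ha, (lt_quantR_iff μ hu t).2 hb⟩
          · rintro ⟨ha, hb⟩
            exact ⟨ha, (lt_quantR_iff μ hu t).1 hb⟩
        rw [he, Real.volume_Ioo, indicator_of_mem (show u ∈ Ioo (0:ℝ) 1 from hu)]
      · have he : (fun t => (t, u)) ⁻¹' A = (∅ : Set ℝ) := by
          ext t
          simp only [hA, mem_preimage, mem_setOf_eq, mem_empty_iff_false, iff_false, not_and]
          intro _ hb
          simp only [mem_Ioo, not_and, not_lt] at hu
          intro hu1
          have h0 : 0 < u := lt_of_le_of_lt (cdfR_nonneg μ _) hb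
          exact absurd (hu h0) (not_le.2 hu1)
        rw [he, measure_empty, indicator_of_notMem (show u ∉ Ioo (0:ℝ) 1 from hu)]
    rw [lintegral_congr hsec, lintegral_indicator measurableSet_Ioo]
  exact h1.symm.trans h2

/-- The tail integral of the survival function is finite for integrable measures. -/
lemma tail_lintegral_lt_top (hX : Integrable id μ) (x : ℝ) :
    ∫⁻ t in Ioi x, ENNReal.ofReal (1 - cdfR μ t) < ⊤ := by
  have hof : ∀ t, ENNReal.ofReal (1 - cdfR μ t) = μ (Ioi t) := by
    intro t
    have h1 : μ (Ioi t) = 1 - μ (Iic t) := by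
      have hc := measure_compl (μ := μ) (measurableSet_Iic (a := t)) (measure_ne_top μ _)
      rw [compl_Iic, measure_univ] at hc
      exact hc
    rw [cdfR, ENNReal.ofReal_sub _ ENNReal.toReal_nonneg, ENNReal.ofReal_one,
      ENNReal.ofReal_toReal (measure_ne_top μ _), h1]
  calc ∫⁻ t in Ioi x, ENNReal.ofReal (1 - cdfR μ t)
      = ∫⁻ t in Ioi x, μ (Ioi t) := lintegral_congr (fun t => by rw [hof])
    _ = ∫⁻ ω, ENNReal.ofReal (ω - x) ∂μ := by
        set B : Set (ℝ × ℝ) := {p | x < p.1 ∧ p.1 < p.2} with hB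
        have hBmeas : MeasurableSet B :=
          (measurable_fst measurableSet_Ioi).inter (measurableSet_lt measurable_fst measurable_snd)
        have e1 : (volume.prod μ) B = ∫⁻ t in Ioi x, μ (Ioi t) := by
          rw [Measure.prod_apply hBmeas]
          have hsec : ∀ t, μ (Prod.mk t ⁻¹' B) =
              (Ioi x).indicator (fun t => μ (Ioi t)) t := by
            intro t
            by_cases ht : x < t
            · have he : Prod.mk t ⁻¹' B = Ioi t := by ext ω; simp [hB, ht]
              rw [he, indicator_of_mem (show t ∈ Ioi x from ht)]
            · have he : Prod.mk t ⁻¹' B = (∅ : Set ℝ) := by ext ω; simp [hB, ht]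
              rw [he, measure_empty, indicator_of_notMem (show t ∉ Ioi x from ht)]
          rw [lintegral_congr hsec, lintegral_indicator measurableSet_Ioi]
        have e2 : (volume.prod μ) B = ∫⁻ ω, ENNReal.ofReal (ω - x) ∂μ := by
          rw [Measure.prod_apply_symm hBmeas]
          refine lintegral_congr (fun ω => ?_)
          have he : (fun t => (t, ω)) ⁻¹' B = Ioo x ω := by ext t; simp [hB, mem_Ioo]
          rw [he, Real.volume_Ioo]
        exact e1.symm.trans e2
    _ ≤ ∫⁻ ω, (ENNReal.ofReal ‖ω‖ + ENNReal.ofReal ‖x‖) ∂μ := by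
        refine lintegral_mono (fun ω => ?_)
        rw [← ENNReal.ofReal_add (norm_nonneg _) (norm_nonneg _)]
        apply ENNReal.ofReal_le_ofReal
        rw [Real.norm_eq_abs, Real.norm_eq_abs]
        linarith [le_abs_self ω, neg_abs_le x]
    _ < ⊤ := by
        rw [lintegral_add_right _ measurable_const, lintegral_const, measure_univ, mul_one]
        refine ENNReal.add_lt_top.2 ⟨?_, ENNReal.ofReal_lt_top⟩
        have hfi := hX.2
        rw [hasFiniteIntegral_iff_norm] at hfi
        simpa using hfi


lemma tail_integral_eq (x : ℝ) :
    ∫ t in Ioi x, (1 - cdfR μ t) = (∫⁻ t in Ioi x, ENNReal.ofReal (1 - cdfR μ t)).toReal := by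
  rw [integral_eq_lintegral_of_nonneg_ae (ae_of_all _ fun t => sub_nonneg.2 (cdfR_le_one μ t))
    ((measurable_const.sub (cdfR_measurable μ)).aestronglyMeasurable)]

end basic

theorem stmt12 (μ ν : Measure ℝ) [IsProbabilityMeasure μ] [IsProbabilityMeasure ν]
    (hX : Integrable id μ) (hY : Integrable id ν)
    (p0 : ℝ) (hp0 : p0 ∈ Set.Ioo (0:ℝ) 1)
    (hord : ∀ p, p0 ≤ p → p < 1 → (∫ u in p..1, quantR μ u) ≤ ∫ u in p..1, quantR ν u) :
    ∀ x, quantR μ p0 ≤ x →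
      (∫ t in Set.Ioi x, (1 - cdfR μ t)) ≤ ∫ t in Set.Ioi x, (1 - cdfR ν t) := by
  intro x hx
  set p := cdfR μ x with hpdef
  have hp0p : p0 ≤ p := (quantR_le_iff μ hp0 x).1 hx
  have hple : p ≤ 1 := cdfR_le_one μ x
  have hppos : 0 < p := lt_of_lt_of_le hp0.1 hp0p
  by_cases hp1 : p < 1
  swap
  · -- degenerate case p = 1
    have hL : ∫ t in Ioi x, (1 - cdfR μ t) = 0 := by
      rw [setIntegral_congr_fun (g := fun _ => (0:ℝ)) measurableSet_Ioi ?_, integral_zero]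
      intro t ht
      have h1 : (1:ℝ) ≤ cdfR μ t := le_trans (not_lt.1 hp1) (cdfR_mono μ (le_of_lt ht))
      have h2 : cdfR μ t ≤ 1 := cdfR_le_one μ t
      simp only; linarith
    rw [hL]
    exact setIntegral_nonneg measurableSet_Ioi (fun t _ => sub_nonneg.2 (cdfR_le_one ν t))
  · have hpI : p ∈ Ioo (0:ℝ) 1 := ⟨hppos, hp1⟩
    have hsub : Ioo p 1 ⊆ Ioo (0:ℝ) 1 := Ioo_subset_Ioo hppos.le le_rfl
    -- Step A : trim the lintegral on the μ side
    have stepA : ∫⁻ u in Ioo (0:ℝ) 1, ENNReal.ofReal (quantR μ u - x)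
        = ∫⁻ u in Ioo p 1, ENNReal.ofReal (quantR μ u - x) := by
      rw [← Ioc_union_Ioo_eq_Ioo hppos.le hp1,
        lintegral_union measurableSet_Ioo (by
          rw [Set.disjoint_left]; intro u hu hu'; exact absurd hu'.1 (not_lt.2 hu.2))]
      have hzero : ∫⁻ u in Ioc (0:ℝ) p, ENNReal.ofReal (quantR μ u - x) = 0 := by
        rw [setLIntegral_congr_fun_ae measurableSet_Ioc (ae_of_all _ fun u hu => ?_),
          lintegral_zero]
        have huI : u ∈ Ioo (0:ℝ) 1 := ⟨hu.1, lt_of_le_of_lt hu.2 hp1⟩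
        have hqle : quantR μ u ≤ x := (quantR_le_iff μ huI x).2 (le_trans hu.2 le_rfl)
        exact ENNReal.ofReal_eq_zero.2 (sub_nonpos.2 hqle)
      rw [hzero, zero_add]
    -- congruence between quantR and quantAux lintegrals on Ioo p 1
    have congrμ : ∫⁻ u in Ioo p 1, ENNReal.ofReal (quantR μ u - x)
        = ∫⁻ u in Ioo p 1, ENNReal.ofReal (quantAux μ u - x) :=
      setLIntegral_congr_fun_ae measurableSet_Ioo
        (ae_of_all _ fun u hu => by rw [quantAux_eq_on μ (hsub hu)])
    have congrν : ∫⁻ u in Ioo p 1, ENNReal.ofReal (quantR ν u - x)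
        = ∫⁻ u in Ioo p 1, ENNReal.ofReal (quantAux ν u - x) :=
      setLIntegral_congr_fun_ae measurableSet_Ioo
        (ae_of_all _ fun u hu => by rw [quantAux_eq_on ν (hsub hu)])
    -- finiteness
    have hLμ := tail_lintegral_lt_top μ hX x
    have hLν := tail_lintegral_lt_top ν hY x
    have hLμ' : ∫⁻ u in Ioo p 1, ENNReal.ofReal (quantAux μ u - x) < ⊤ := by
      rw [← congrμ, ← stepA, ← tail_lintegral μ x]; exact hLμ
    have hLν' : ∫⁻ u in Ioo p 1, ENNReal.ofReal (quantAux ν u - x) < ⊤ := by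
      have h := hLν
      rw [tail_lintegral ν x] at h
      refine lt_of_le_of_lt ?_ h
      rw [← congrν]
      exact lintegral_mono_set hsub
    -- Step B : μ side real integral equality
    have measμx : AEStronglyMeasurable (fun u => quantAux μ u - x)
        (volume.restrict (Ioo p 1)) :=
      ((quantAux_measurable μ).sub measurable_const).aestronglyMeasurable
    have measνx : AEStronglyMeasurable (fun u => quantAux ν u - x)
        (volume.restrict (Ioo p 1)) :=
      ((quantAux_measurable ν).sub measurable_const).aestronglyMeasurable
    have hnonnegμ : 0 ≤ᵐ[volume.restrict (Ioo p 1)] fun u => quantAux μ u - x := by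
      refine (ae_restrict_iff' measurableSet_Ioo).2 (ae_of_all _ fun u hu => ?_)
      have huI := hsub hu
      simp only [Pi.zero_apply]
      rw [quantAux_eq_on μ huI]
      have : x < quantR μ u := (lt_quantR_iff μ huI x).2 hu.1
      linarith
    have stepB : ∫ u in Ioo p 1, (quantAux μ u - x)
        = (∫⁻ u in Ioo p 1, ENNReal.ofReal (quantAux μ u - x)).toReal := by
      rw [integral_eq_lintegral_of_nonneg_ae hnonnegμ measμx]
    -- Step C : integrability on the μ side
    have intμ' : Integrable (fun u => quantAux μ u - x) (volume.restrict (Ioo p 1)) := by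
      have h := integrable_toReal_of_lintegral_ne_top
        (f := fun u => ENNReal.ofReal (quantAux μ u - x))
        (((quantAux_measurable μ).sub measurable_const).ennreal_ofReal.aemeasurable)
        hLμ'.ne
      refine h.congr ?_
      refine hnonnegμ.mono (fun u hu => ?_)
      simp only
      rw [ENNReal.toReal_ofReal hu]
    have intconst : Integrable (fun _ : ℝ => x) (volume.restrict (Ioo p 1)) := by
      refine integrableOn_const ?_
      rw [Real.volume_Ioo]; exact ENNReal.ofReal_ne_top
    have intμ : Integrable (fun u => quantAux μ u) (volume.restrict (Ioo p 1)) := by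
      have := intμ'.add intconst
      refine this.congr (ae_of_all _ fun u => by simp)
    -- Step E : integrability on the ν side
    have intgν : Integrable (fun u => (ENNReal.ofReal (quantAux ν u - x)).toReal)
        (volume.restrict (Ioo p 1)) :=
      integrable_toReal_of_lintegral_ne_top
        (((quantAux_measurable ν).sub measurable_const).ennreal_ofReal.aemeasurable)
        hLν'.ne
    have intν : Integrable (fun u => quantAux ν u) (volume.restrict (Ioo p 1)) := by
      set c := quantR ν p with hc
      have intconst2 : Integrable (fun _ : ℝ => |x| + |c|) (volume.restrict (Ioo p 1)) := by
        refine integrableOn_const ?_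
        rw [Real.volume_Ioo]; exact ENNReal.ofReal_ne_top
      refine Integrable.mono' (intgν.add intconst2)
        ((quantAux_measurable ν).aestronglyMeasurable)
        ?_
      refine (ae_restrict_iff' measurableSet_Ioo).2 (ae_of_all _ fun u hu => ?_)
      have huI := hsub hu
      rw [quantAux_eq_on ν huI]
      have hcle : c ≤ quantR ν u := quantR_mono ν hpI huI hu.1.le
      have hmax : quantR ν u - x ≤ (ENNReal.ofReal (quantAux ν u - x)).toReal := by
        rw [quantAux_eq_on ν huI]
        rcases le_or_gt 0 (quantR ν u - x) with h | h
        · rw [ENNReal.toReal_ofReal h]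
        · rw [ENNReal.ofReal_eq_zero.2 h.le]; simpa using h.le
      have htnn : 0 ≤ (ENNReal.ofReal (quantAux ν u - x)).toReal := ENNReal.toReal_nonneg
      rw [Real.norm_eq_abs]
      simp only [Pi.add_apply]
      rcases le_or_gt 0 (quantR ν u) with h | h
      · rw [abs_of_nonneg h]
        have : quantR ν u ≤ (ENNReal.ofReal (quantAux ν u - x)).toReal + |x| := by
          have := le_abs_self x; linarith
        linarith [abs_nonneg c]
      · rw [abs_of_neg h]
        have : -quantR ν u ≤ -c := by linarith
        have h2 : -c ≤ |c| := neg_le_abs c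
        linarith [abs_nonneg x]
    have intν' : Integrable (fun u => quantAux ν u - x) (volume.restrict (Ioo p 1)) :=
      intν.sub intconst
    -- Step D : order from hord
    have stepD : ∫ u in Ioo p 1, quantAux μ u ≤ ∫ u in Ioo p 1, quantAux ν u := by
      rw [setIntegral_congr_fun measurableSet_Ioo
          (fun u (hu : u ∈ Ioo p 1) => quantAux_eq_on μ (hsub hu)),
        setIntegral_congr_fun measurableSet_Ioo
          (fun u (hu : u ∈ Ioo p 1) => quantAux_eq_on ν (hsub hu)),
        ← integral_Ioc_eq_integral_Ioo, ← integral_Ioc_eq_integral_Ioo,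
        ← intervalIntegral.integral_of_le hp1.le, ← intervalIntegral.integral_of_le hp1.le]
      exact hord p hp0p hp1
    have stepD' : ∫ u in Ioo p 1, (quantAux μ u - x) ≤ ∫ u in Ioo p 1, (quantAux ν u - x) := by
      rw [integral_sub intμ intconst, integral_sub intν intconst]
      linarith
    -- Step F : ν side bound
    have stepF : ∫ u in Ioo p 1, (quantAux ν u - x)
        ≤ (∫⁻ u in Ioo (0:ℝ) 1, ENNReal.ofReal (quantR ν u - x)).toReal := by
      have h1 : ∫ u in Ioo p 1, (quantAux ν u - x)
          ≤ ∫ u in Ioo p 1, (ENNReal.ofReal (quantAux ν u - x)).toReal := by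
        refine integral_mono_ae intν' intgν (ae_of_all _ fun u => ?_)
        simp only
        rcases le_or_gt 0 (quantAux ν u - x) with h | h
        · rw [ENNReal.toReal_ofReal h]
        · rw [ENNReal.ofReal_eq_zero.2 h.le]; simpa using h.le
      have h2 : ∫ u in Ioo p 1, (ENNReal.ofReal (quantAux ν u - x)).toReal
          = (∫⁻ u in Ioo p 1, ENNReal.ofReal (quantAux ν u - x)).toReal := by
        rw [integral_eq_lintegral_of_nonneg_ae (f := fun u => (ENNReal.ofReal (quantAux ν u - x)).toReal)
          (ae_of_all _ fun u => ENNReal.toReal_nonneg)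
          (ENNReal.measurable_toReal.comp
            ((quantAux_measurable ν).sub measurable_const).ennreal_ofReal).aestronglyMeasurable]
        congr 1
        refine lintegral_congr (fun u => ?_)
        rw [ENNReal.ofReal_toReal ENNReal.ofReal_ne_top]
      have h3 : ∫⁻ u in Ioo p 1, ENNReal.ofReal (quantAux ν u - x)
          ≤ ∫⁻ u in Ioo (0:ℝ) 1, ENNReal.ofReal (quantR ν u - x) := by
        rw [← congrν]
        exact lintegral_mono_set hsub
      calc ∫ u in Ioo p 1, (quantAux ν u - x) ≤ _ := h1
        _ = _ := h2
        _ ≤ _ := ENNReal.toReal_mono (by rw [← tail_lintegral ν x]; exact hLν.ne) h3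
    -- final chain
    calc ∫ t in Ioi x, (1 - cdfR μ t)
        = (∫⁻ t in Ioi x, ENNReal.ofReal (1 - cdfR μ t)).toReal := tail_integral_eq μ x
      _ = (∫⁻ u in Ioo p 1, ENNReal.ofReal (quantAux μ u - x)).toReal := by
          rw [tail_lintegral μ x, stepA, congrμ]
      _ = ∫ u in Ioo p 1, (quantAux μ u - x) := stepB.symm
      _ ≤ ∫ u in Ioo p 1, (quantAux ν u - x) := stepD'
      _ ≤ (∫⁻ u in Ioo (0:ℝ) 1, ENNReal.ofReal (quantR ν u - x)).toReal := stepF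
      _ = ∫ t in Ioi x, (1 - cdfR ν t) := by
          rw [tail_integral_eq ν x, tail_lintegral ν x]
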